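/- In the local model, let a, b, c be real numbers with a·c − b² ≠ 0, let V = Σ_h V^h ∂/∂x^h be a smooth vector field on U, and let X^C be its complete lift to TU. If X^C is conformal for the lift metric g̃ = a g₁ + b g₂ + c g₃ with factor Ω, i.e. L_{X^C} g̃ = 2 Ω g̃ for a smooth function Ω : TU → ℝ, then ∂Ω/∂y^k = 0 for every k; that is, Ω depends only on the position variables x. -/

import Mathlib

open scoped BigOperators

namespace TangentLift

/-- A point of the tangent bundle `TU = U × ℝⁿ` in coordinates `(x, y)`. -/
abbrev Pt (n : ℕ) := (Fin n → ℝ) × (Fin n → ℝ)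

variable {n : ℕ}

/-- Partial derivative `∂_i f` of a function on `ℝⁿ`. -/
noncomputable def pd (i : Fin n) (f : (Fin n → ℝ) → ℝ) (x : Fin n → ℝ) : ℝ :=
  fderiv ℝ f x (Pi.single i 1)

/-- The Christoffel symbols `Γ^k_{ij}` of a metric `g` given in coordinates. -/
noncomputable def Gam (g : (Fin n → ℝ) → Matrix (Fin n) (Fin n) ℝ)
    (k i j : Fin n) (x : Fin n → ℝ) : ℝ :=
  (1 / 2) * ∑ m, (g x)⁻¹ k m *
    (pd i (fun z => g z m j) x + pd j (fun z => g z m i) x - pd m (fun z => g z i j) x)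

/-- The curvature tensor `K_{ijk}{}^m` of the metric `g`. -/
noncomputable def Curv (g : (Fin n → ℝ) → Matrix (Fin n) (Fin n) ℝ)
    (i j k m : Fin n) (x : Fin n → ℝ) : ℝ :=
  pd i (Gam g m j k) x - pd j (Gam g m i k) x
    + ∑ a, (Gam g m i a x * Gam g a j k x - Gam g m j a x * Gam g a i k x)

/-- The horizontal adapted frame field `X_h(x,y) = ∂/∂x^h − Σ_{a,m} y^a Γ^m_{ah}(x) ∂/∂y^m`. -/
noncomputable def XH (g : (Fin n → ℝ) → Matrix (Fin n) (Fin n) ℝ) (h : Fin n) (p : Pt n) :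
    Pt n :=
  (Pi.single h 1, fun m => -∑ a, p.2 a * Gam g m a h p.1)

/-- The vertical adapted frame field `X_h̄(x,y) = ∂/∂y^h`. -/
noncomputable def XV (h : Fin n) (_p : Pt n) : Pt n := (0, Pi.single h 1)

/-- Lie bracket of vector fields on `U × ℝⁿ`: `[V,W](p) = DW(p)(V(p)) − DV(p)(W(p))`. -/
noncomputable def lie (V W : Pt n → Pt n) (p : Pt n) : Pt n :=
  fderiv ℝ W p (V p) - fderiv ℝ V p (W p)

/-- Directional derivative of a function on `TU` along the vector field `Z`. -/
noncomputable def dirD (Z : Pt n → Pt n) (f : Pt n → ℝ) (p : Pt n) : ℝ :=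
  fderiv ℝ f p (Z p)

/-- The vertical components of a tangent vector `v` at `p` in the adapted frame,
i.e. the coefficients of the `X_m̄` in the expansion of `v`. -/
noncomputable def ver (g : (Fin n → ℝ) → Matrix (Fin n) (Fin n) ℝ) (p : Pt n) (v : Pt n) :
    Fin n → ℝ :=
  fun m => v.2 m + ∑ a, ∑ i, p.2 a * Gam g m a i p.1 * v.1 i

/-- The bilinear-form field `g₁` on `TU`: `g₁(X_i,X_j) = g_{ij}`, vanishing on vertical
arguments. -/
noncomputable def g1 (g : (Fin n → ℝ) → Matrix (Fin n) (Fin n) ℝ) (p : Pt n) (v w : Pt n) : ℝ :=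
  ∑ i, ∑ j, g p.1 i j * v.1 i * w.1 j

/-- The bilinear-form field `g₂` on `TU`: `g₂(X_i,X_j̄) = g₂(X_j̄,X_i) = g_{ij}`, vanishing on
two horizontal or two vertical arguments. -/
noncomputable def g2 (g : (Fin n → ℝ) → Matrix (Fin n) (Fin n) ℝ) (p : Pt n) (v w : Pt n) : ℝ :=
  ∑ i, ∑ j, g p.1 i j * (v.1 i * ver g p w j + w.1 i * ver g p v j)

/-- The bilinear-form field `g₃` on `TU`: `g₃(X_ī,X_j̄) = g_{ij}`, vanishing on horizontal
arguments. -/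
noncomputable def g3 (g : (Fin n → ℝ) → Matrix (Fin n) (Fin n) ℝ) (p : Pt n) (v w : Pt n) : ℝ :=
  ∑ i, ∑ j, g p.1 i j * ver g p v i * ver g p w j

/-- The lift metric `g̃ = a g₁ + b g₂ + c g₃` on `TU`. -/
noncomputable def gLift (g : (Fin n → ℝ) → Matrix (Fin n) (Fin n) ℝ) (a b c : ℝ)
    (p : Pt n) (v w : Pt n) : ℝ :=
  a * g1 g p v w + b * g2 g p v w + c * g3 g p v w

/-- Lie derivative of a field `S` of bilinear forms along the vector field `X`, evaluated on
the vector fields `V`, `W` at the point `p`: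
`(L_X S)(V,W) = X·(S(V,W)) − S([X,V],W) − S(V,[X,W])`. -/
noncomputable def lieDer (X : Pt n → Pt n) (S : Pt n → Pt n → Pt n → ℝ)
    (V W : Pt n → Pt n) (p : Pt n) : ℝ :=
  dirD X (fun q => S q (V q) (W q)) p - S p (lie X V p) (W p) - S p (V p) (lie X W p)

/-- `g` is a Riemannian metric on `U` given in coordinates: each component is smooth on `U`,
and at each point of `U` the matrix `(g_{ij})` is symmetric positive definite. -/
def IsMetric (U : Set (Fin n → ℝ)) (g : (Fin n → ℝ) → Matrix (Fin n) (Fin n) ℝ) : Prop :=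
  (∀ i j, ContDiffOn ℝ (⊤ : ℕ∞) (fun x => g x i j) U) ∧
    (∀ x ∈ U, (g x).IsSymm) ∧ (∀ x ∈ U, (g x).PosDef)

/-- The vector field `X = Σ_h X^h X_h + Σ_h X^h̄ X_h̄` on `TU` with the given components in
the adapted frame; for a fiber-preserving field the `X^h` are functions of `x` alone. -/
noncomputable def mkVF (g : (Fin n → ℝ) → Matrix (Fin n) (Fin n) ℝ)
    (Xh' : Fin n → (Fin n → ℝ) → ℝ) (Xv' : Fin n → Pt n → ℝ) (p : Pt n) : Pt n :=
  (∑ h, Xh' h p.1 • XH g h p) + ∑ h, Xv' h p • XV h p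

/-- Smoothness of the components of a fiber-preserving vector field on `TU`. -/
def SmoothComponents (U : Set (Fin n → ℝ)) (Xh' : Fin n → (Fin n → ℝ) → ℝ)
    (Xv' : Fin n → Pt n → ℝ) : Prop :=
  (∀ h, ContDiffOn ℝ (⊤ : ℕ∞) (Xh' h) U) ∧ (∀ h, ContDiffOn ℝ (⊤ : ℕ∞) (Xv' h) (U ×ˢ Set.univ))

/-- `X` is a conformal vector field for the lift metric `g̃ = a g₁ + b g₂ + c g₃` with
conformal factor `Ω`, i.e. `L_X g̃ = 2 Ω g̃` as fields of bilinear forms on `TU`, tested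
against all smooth vector fields on `TU`. -/
def Conformal (U : Set (Fin n → ℝ)) (g : (Fin n → ℝ) → Matrix (Fin n) (Fin n) ℝ)
    (a b c : ℝ) (X : Pt n → Pt n) (Ω : Pt n → ℝ) : Prop :=
  ∀ V W : Pt n → Pt n, ContDiffOn ℝ (⊤ : ℕ∞) V (U ×ˢ Set.univ) → ContDiffOn ℝ (⊤ : ℕ∞) W (U ×ˢ Set.univ) →
    ∀ p : Pt n, p.1 ∈ U →
      lieDer X (gLift g a b c) V W p = 2 * Ω p * gLift g a b c p (V p) (W p)

/-- The components `(L_V g)_{ij}` of the Lie derivative of `g` along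
`V = Σ_h V^h ∂/∂x^h` on `U`. -/
noncomputable def lieG (g : (Fin n → ℝ) → Matrix (Fin n) (Fin n) ℝ)
    (Vf : Fin n → (Fin n → ℝ) → ℝ) (i j : Fin n) (x : Fin n → ℝ) : ℝ :=
  ∑ a, (Vf a x * pd a (fun z => g z i j) x + pd i (Vf a) x * g x a j + pd j (Vf a) x * g x i a)

/-- The covariant derivative `∇_i V^m = ∂_i V^m + Σ_a Γ^m_{ia} V^a`. -/
noncomputable def covD (g : (Fin n → ℝ) → Matrix (Fin n) (Fin n) ℝ)
    (Vf : Fin n → (Fin n → ℝ) → ℝ) (i m : Fin n) (x : Fin n → ℝ) : ℝ :=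
  pd i (Vf m) x + ∑ a, Gam g m i a x * Vf a x

/-- The complete lift `X^C = Σ_h V^h X_h + Σ_{h,m} y^m (Σ_a Γ^h_{ma} V^a + ∂_m V^h) X_h̄`
of the vector field `V = Σ_h V^h ∂/∂x^h` on `U`. -/
noncomputable def completeLift (g : (Fin n → ℝ) → Matrix (Fin n) (Fin n) ℝ)
    (Vf : Fin n → (Fin n → ℝ) → ℝ) (p : Pt n) : Pt n :=
  (∑ h, Vf h p.1 • XH g h p)
    + ∑ h, (∑ m, p.2 m * ((∑ a, Gam g h m a p.1 * Vf a p.1) + pd m (Vf h) p.1)) • XV h p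

/-- The vertical lift `X^V = Σ_h V^h X_h̄` of `V = Σ_h V^h ∂/∂x^h`. -/
noncomputable def vertLift (Vf : Fin n → (Fin n → ℝ) → ℝ) (p : Pt n) : Pt n :=
  ∑ h, Vf h p.1 • XV h p

/-- The horizontal lift `X^H = Σ_h V^h X_h` of `V = Σ_h V^h ∂/∂x^h`. -/
noncomputable def horLift (g : (Fin n → ℝ) → Matrix (Fin n) (Fin n) ℝ)
    (Vf : Fin n → (Fin n → ℝ) → ℝ) (p : Pt n) : Pt n :=
  ∑ h, Vf h p.1 • XH g h p


section Aux

lemma fderiv_fst_comp (φ : (Fin n → ℝ) → ℝ) (p : Pt n) (hφ : DifferentiableAt ℝ φ p.1)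
    (v : Pt n) : fderiv ℝ (fun q : Pt n => φ q.1) p v = fderiv ℝ φ p.1 v.1 := by
  have h := (hφ.hasFDerivAt.comp p hasFDerivAt_fst).fderiv
  rw [show (fun q : Pt n => φ q.1) = φ ∘ Prod.fst from rfl, h]; rfl

lemma fderiv_comp1 (F : Pt n → Pt n) (p : Pt n) (hF : DifferentiableAt ℝ F p) (k : Fin n)
    (v : Pt n) : fderiv ℝ (fun q => (F q).1 k) p v = (fderiv ℝ F p v).1 k := by
  have h : (fun q => (F q).1 k) =
    ⇑((ContinuousLinearMap.proj k).comp (ContinuousLinearMap.fst ℝ (Fin n → ℝ) (Fin n → ℝ))) ∘ F := rfl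
  rw [h, fderiv_comp p (ContinuousLinearMap.differentiableAt _) hF, ContinuousLinearMap.fderiv]; rfl

lemma fderiv_comp2 (F : Pt n → Pt n) (p : Pt n) (hF : DifferentiableAt ℝ F p) (k : Fin n)
    (v : Pt n) : fderiv ℝ (fun q => (F q).2 k) p v = (fderiv ℝ F p v).2 k := by
  have h : (fun q => (F q).2 k) =
    ⇑((ContinuousLinearMap.proj k).comp (ContinuousLinearMap.snd ℝ (Fin n → ℝ) (Fin n → ℝ))) ∘ F := rfl
  rw [h, fderiv_comp p (ContinuousLinearMap.differentiableAt _) hF, ContinuousLinearMap.fderiv]; rfl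

lemma affine_fderiv (f : Pt n → ℝ) (p v : Pt n) (α β : ℝ)
    (hf : DifferentiableAt ℝ f p) (h : ∀ t : ℝ, f (p + t • v) = α + t * β) :
    fderiv ℝ f p v = β := by
  rw [← hf.lineDeriv_eq_fderiv]
  unfold lineDeriv
  rw [funext h]
  simpa using (((hasDerivAt_id (0:ℝ)).mul_const β).const_add α).deriv

lemma pd_contDiffOn {U : Set (Fin n → ℝ)} (hU : IsOpen U) {f : (Fin n → ℝ) → ℝ}
    (hf : ContDiffOn ℝ (⊤ : ℕ∞) f U) (i : Fin n) : ContDiffOn ℝ (⊤ : ℕ∞) (pd i f) U := by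
  have h1 : ContDiffOn ℝ (⊤ : ℕ∞) (fderiv ℝ f) U := hf.fderiv_of_isOpen hU (by simp)
  exact h1.clm_apply contDiffOn_const

lemma diffAt_of_contDiffOn {U : Set (Fin n → ℝ)} (hU : IsOpen U) {f : (Fin n → ℝ) → ℝ}
    (hf : ContDiffOn ℝ (⊤ : ℕ∞) f U) {x} (hx : x ∈ U) : DifferentiableAt ℝ f x :=
  (hf.differentiableOn (by simp)).differentiableAt (hU.mem_nhds hx)

/-- The canonical form of the complete lift. -/
noncomputable def XC (Vf : Fin n → (Fin n → ℝ) → ℝ) (q : Pt n) : Pt n :=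
  (fun h => Vf h q.1, fun m => ∑ m', q.2 m' * pd m' (Vf m) q.1)

lemma completeLift_eq (g : (Fin n → ℝ) → Matrix (Fin n) (Fin n) ℝ)
    (Vf : Fin n → (Fin n → ℝ) → ℝ) : completeLift g Vf = XC Vf := by
  funext q
  refine Prod.ext ?_ ?_
  · show (_ + _) = _
    rw [Prod.fst_sum, Prod.fst_sum]
    funext k
    simp [completeLift, XH, XV, XC, Pi.single_apply, Finset.sum_apply, mul_ite]
  · show (_ + _) = _
    rw [Prod.snd_sum, Prod.snd_sum]
    funext m
    simp only [XH, XV, XC, Prod.smul_mk, Pi.add_apply, Finset.sum_apply,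
      Pi.smul_apply, smul_eq_mul, Pi.single_apply, mul_ite, mul_one, mul_zero,
      Finset.sum_ite_eq, Finset.mem_univ, if_true]
    have key : (∑ h, Vf h q.1 * (∑ a, q.2 a * Gam g m a h q.1))
        = ∑ m', q.2 m' * ∑ a, Gam g m m' a q.1 * Vf a q.1 := by
      simp only [Finset.mul_sum]
      rw [Finset.sum_comm]
      exact Finset.sum_congr rfl fun a _ => Finset.sum_congr rfl fun h _ => by ring
    have expand : (∑ m', q.2 m' * ((∑ a, Gam g m m' a q.1 * Vf a q.1) + pd m' (Vf m) q.1))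
        = (∑ m', q.2 m' * ∑ a, Gam g m m' a q.1 * Vf a q.1)
          + ∑ m', q.2 m' * pd m' (Vf m) q.1 := by
      rw [← Finset.sum_add_distrib]
      exact Finset.sum_congr rfl fun _ _ => by ring
    rw [expand, ← key]
    have neg : (∑ h, Vf h q.1 * (-∑ a, q.2 a * Gam g m a h q.1))
        = -∑ h, Vf h q.1 * (∑ a, q.2 a * Gam g m a h q.1) := by
      rw [← Finset.sum_neg_distrib]
      exact Finset.sum_congr rfl fun _ _ => by ring
    rw [neg]
    ring

lemma XC2_diffAt {U : Set (Fin n → ℝ)} (hU : IsOpen U) {Vf : Fin n → (Fin n → ℝ) → ℝ}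
    (hVf : ∀ h, ContDiffOn ℝ (⊤ : ℕ∞) (Vf h) U) {p : Pt n} (hp : p.1 ∈ U) (m : Fin n) :
    DifferentiableAt ℝ (fun q : Pt n => ∑ m', q.2 m' * pd m' (Vf m) q.1) p := by
  refine DifferentiableAt.fun_sum fun m' _ => DifferentiableAt.mul ?_ ?_
  · exact differentiableAt_pi.1 differentiableAt_snd m'
  · exact (diffAt_of_contDiffOn hU (pd_contDiffOn hU (hVf m) m') hp).comp p differentiableAt_fst

lemma XC_diffAt {U : Set (Fin n → ℝ)} (hU : IsOpen U) {Vf : Fin n → (Fin n → ℝ) → ℝ}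
    (hVf : ∀ h, ContDiffOn ℝ (⊤ : ℕ∞) (Vf h) U) {p : Pt n} (hp : p.1 ∈ U) :
    DifferentiableAt ℝ (XC Vf) p := by
  refine DifferentiableAt.prodMk (differentiableAt_pi.2 fun h => ?_)
    (differentiableAt_pi.2 fun m => XC2_diffAt hU hVf hp m)
  exact (diffAt_of_contDiffOn hU (hVf h) hp).comp p differentiableAt_fst

lemma fderiv_XC_vert {U : Set (Fin n → ℝ)} (hU : IsOpen U) {Vf : Fin n → (Fin n → ℝ) → ℝ}
    (hVf : ∀ h, ContDiffOn ℝ (⊤ : ℕ∞) (Vf h) U) {p : Pt n} (hp : p.1 ∈ U) (i : Fin n) :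
    fderiv ℝ (XC Vf) p ((0 : Fin n → ℝ), Pi.single i 1)
      = ((0 : Fin n → ℝ), fun m => pd i (Vf m) p.1) := by
  have hd := XC_diffAt hU hVf hp
  refine Prod.ext ?_ ?_
  · funext k
    rw [← fderiv_comp1 (XC Vf) p hd k]
    have : (fun q : Pt n => (XC Vf q).1 k) = fun q : Pt n => Vf k q.1 := rfl
    rw [this, fderiv_fst_comp (Vf k) p (diffAt_of_contDiffOn hU (hVf k) hp)]
    simp
  · funext m
    rw [← fderiv_comp2 (XC Vf) p hd m]
    have : (fun q : Pt n => (XC Vf q).2 m)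
        = fun q : Pt n => ∑ m', q.2 m' * pd m' (Vf m) q.1 := rfl
    rw [this]
    refine affine_fderiv _ p _ (∑ m', p.2 m' * pd m' (Vf m) p.1) (pd i (Vf m) p.1)
      (XC2_diffAt hU hVf hp m) fun t => ?_
    have h1 : (p + t • (((0 : Fin n → ℝ), Pi.single i 1) : Pt n)).1 = p.1 := by
      simp
    have h2 : (p + t • (((0 : Fin n → ℝ), Pi.single i 1) : Pt n)).2
        = fun m' => p.2 m' + t * (Pi.single i 1 : Fin n → ℝ) m' := by
      funext m'; simp
    rw [h1, h2]
    simp only [add_mul, Finset.sum_add_distrib, Pi.single_apply, mul_ite, mul_one, mul_zero,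
      ite_mul, zero_mul, Finset.sum_ite_eq', Finset.mem_univ, if_true]

lemma fderiv_XC_hor_fst {U : Set (Fin n → ℝ)} (hU : IsOpen U) {Vf : Fin n → (Fin n → ℝ) → ℝ}
    (hVf : ∀ h, ContDiffOn ℝ (⊤ : ℕ∞) (Vf h) U) {p : Pt n} (hp : p.1 ∈ U) (j k : Fin n) :
    (fderiv ℝ (XC Vf) p (Pi.single j 1, (0 : Fin n → ℝ))).1 k = pd j (Vf k) p.1 := by
  rw [← fderiv_comp1 (XC Vf) p (XC_diffAt hU hVf hp) k]
  have : (fun q : Pt n => (XC Vf q).1 k) = fun q : Pt n => Vf k q.1 := rfl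
  rw [this, fderiv_fst_comp (Vf k) p (diffAt_of_contDiffOn hU (hVf k) hp)]
  rfl

lemma ver_vert (g : (Fin n → ℝ) → Matrix (Fin n) (Fin n) ℝ) (p : Pt n) (u : Fin n → ℝ) :
    ver g p ((0 : Fin n → ℝ), u) = u := by
  funext m; simp [ver]

lemma glift_vv (g : (Fin n → ℝ) → Matrix (Fin n) (Fin n) ℝ) (a b c : ℝ) (p : Pt n)
    (u w : Fin n → ℝ) :
    gLift g a b c p ((0 : Fin n → ℝ), u) ((0 : Fin n → ℝ), w)
      = c * ∑ k, ∑ l, g p.1 k l * u k * w l := by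
  simp [gLift, g1, g2, g3, ver_vert]

lemma glift0_vert_left (g : (Fin n → ℝ) → Matrix (Fin n) (Fin n) ℝ) (a b : ℝ) (p : Pt n)
    (u : Fin n → ℝ) (w : Pt n) :
    gLift g a b 0 p ((0 : Fin n → ℝ), u) w
      = b * ∑ k, ∑ l, g p.1 k l * (w.1 k * u l) := by
  simp [gLift, g1, g2, g3, ver_vert]

lemma keyA {U : Set (Fin n → ℝ)} (hU : IsOpen U) (g : (Fin n → ℝ) → Matrix (Fin n) (Fin n) ℝ)
    (hgs : ∀ i j, ContDiffOn ℝ (⊤ : ℕ∞) (fun x => g x i j) U) (a b c : ℝ)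
    (Vf : Fin n → (Fin n → ℝ) → ℝ) (hVf : ∀ h, ContDiffOn ℝ (⊤ : ℕ∞) (Vf h) U) (i j : Fin n)
    {p : Pt n} (hp : p.1 ∈ U) :
    lieDer (completeLift g Vf) (gLift g a b c)
      (fun _ => (((0 : Fin n → ℝ), Pi.single i 1) : Pt n))
      (fun _ => (((0 : Fin n → ℝ), Pi.single j 1) : Pt n)) p
      = c * (fderiv ℝ (fun z => g z i j) p.1 (fun h => Vf h p.1)
          + (∑ k, g p.1 k j * pd i (Vf k) p.1) + (∑ l, g p.1 i l * pd j (Vf l) p.1)) := by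
  have hdg : DifferentiableAt ℝ (fun z => g z i j) p.1 := diffAt_of_contDiffOn hU (hgs i j) hp
  have hf : (fun q : Pt n => gLift g a b c q ((0 : Fin n → ℝ), Pi.single i 1)
      ((0 : Fin n → ℝ), Pi.single j 1)) = fun q : Pt n => c * g q.1 i j := by
    funext q
    rw [glift_vv]
    congr 1
    simp [Pi.single_apply, mul_ite, ite_mul, Finset.sum_ite_eq, Finset.sum_ite_eq']
  have e1 : dirD (completeLift g Vf)
      (fun q : Pt n => gLift g a b c q ((0 : Fin n → ℝ), Pi.single i 1)
        ((0 : Fin n → ℝ), Pi.single j 1)) p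
      = c * fderiv ℝ (fun z => g z i j) p.1 (fun h => Vf h p.1) := by
    unfold dirD
    rw [hf, completeLift_eq g Vf, fderiv_fst_comp (fun z => c * g z i j) p (hdg.const_mul c),
      fderiv_const_mul hdg c]
    rfl
  have e2 : ∀ i' : Fin n,
      lie (completeLift g Vf) (fun _ => (((0 : Fin n → ℝ), Pi.single i' 1) : Pt n)) p
      = ((0 : Fin n → ℝ), fun m => -pd i' (Vf m) p.1) := by
    intro i'
    unfold lie
    rw [completeLift_eq g Vf, fderiv_XC_vert hU hVf hp i']
    have hc : fderiv ℝ (fun _ : Pt n => (((0 : Fin n → ℝ), Pi.single i' 1) : Pt n)) p = 0 :=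
      fderiv_const_apply _
    rw [hc]
    refine Prod.ext ?_ ?_
    · simp
    · funext m; simp
  have v2 : gLift g a b c p ((0 : Fin n → ℝ), fun m => -pd i (Vf m) p.1)
      ((0 : Fin n → ℝ), Pi.single j 1) = -(c * ∑ k, g p.1 k j * pd i (Vf k) p.1) := by
    rw [glift_vv]
    simp [Pi.single_apply, mul_ite, ite_mul, Finset.sum_ite_eq, Finset.sum_ite_eq',
      mul_neg, neg_mul, Finset.mul_sum]
  have v3 : gLift g a b c p ((0 : Fin n → ℝ), Pi.single i 1)
      ((0 : Fin n → ℝ), fun m => -pd j (Vf m) p.1)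
      = -(c * ∑ l, g p.1 i l * pd j (Vf l) p.1) := by
    rw [glift_vv]
    simp [Pi.single_apply, mul_ite, ite_mul, Finset.sum_ite_eq, Finset.sum_ite_eq',
      mul_neg, neg_mul, Finset.mul_sum]
  have goal1 : lieDer (completeLift g Vf) (gLift g a b c)
      (fun _ => (((0 : Fin n → ℝ), Pi.single i 1) : Pt n))
      (fun _ => (((0 : Fin n → ℝ), Pi.single j 1) : Pt n)) p
      = dirD (completeLift g Vf)
          (fun q : Pt n => gLift g a b c q ((0 : Fin n → ℝ), Pi.single i 1)
            ((0 : Fin n → ℝ), Pi.single j 1)) p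
        - gLift g a b c p
            (lie (completeLift g Vf) (fun _ => (((0 : Fin n → ℝ), Pi.single i 1) : Pt n)) p)
            ((0 : Fin n → ℝ), Pi.single j 1)
        - gLift g a b c p ((0 : Fin n → ℝ), Pi.single i 1)
            (lie (completeLift g Vf) (fun _ => (((0 : Fin n → ℝ), Pi.single j 1) : Pt n)) p) :=
    rfl
  rw [goal1, e1, e2 i, e2 j, v2, v3]
  ring

lemma keyB {U : Set (Fin n → ℝ)} (hU : IsOpen U) (g : (Fin n → ℝ) → Matrix (Fin n) (Fin n) ℝ)
    (hgs : ∀ i j, ContDiffOn ℝ (⊤ : ℕ∞) (fun x => g x i j) U) (a b : ℝ)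
    (Vf : Fin n → (Fin n → ℝ) → ℝ) (hVf : ∀ h, ContDiffOn ℝ (⊤ : ℕ∞) (Vf h) U) (i j : Fin n)
    {p : Pt n} (hp : p.1 ∈ U) :
    lieDer (completeLift g Vf) (gLift g a b 0)
      (fun _ => (((0 : Fin n → ℝ), Pi.single i 1) : Pt n))
      (fun _ => ((Pi.single j 1, (0 : Fin n → ℝ)) : Pt n)) p
      = b * (fderiv ℝ (fun z => g z j i) p.1 (fun h => Vf h p.1)
          + (∑ l, g p.1 j l * pd i (Vf l) p.1) + (∑ k, g p.1 k i * pd j (Vf k) p.1)) := by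
  have hdg : DifferentiableAt ℝ (fun z => g z j i) p.1 := diffAt_of_contDiffOn hU (hgs j i) hp
  have hf : (fun q : Pt n => gLift g a b 0 q ((0 : Fin n → ℝ), Pi.single i 1)
      ((Pi.single j 1, (0 : Fin n → ℝ)) : Pt n)) = fun q : Pt n => b * g q.1 j i := by
    funext q
    rw [glift0_vert_left]
    congr 1
    simp [Pi.single_apply, mul_ite, ite_mul, Finset.sum_ite_eq, Finset.sum_ite_eq']
  have e1 : dirD (completeLift g Vf)
      (fun q : Pt n => gLift g a b 0 q ((0 : Fin n → ℝ), Pi.single i 1)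
        ((Pi.single j 1, (0 : Fin n → ℝ)) : Pt n)) p
      = b * fderiv ℝ (fun z => g z j i) p.1 (fun h => Vf h p.1) := by
    unfold dirD
    rw [hf, completeLift_eq g Vf, fderiv_fst_comp (fun z => b * g z j i) p (hdg.const_mul b),
      fderiv_const_mul hdg b]
    rfl
  have e2 : lie (completeLift g Vf) (fun _ => (((0 : Fin n → ℝ), Pi.single i 1) : Pt n)) p
      = ((0 : Fin n → ℝ), fun m => -pd i (Vf m) p.1) := by
    unfold lie
    rw [completeLift_eq g Vf, fderiv_XC_vert hU hVf hp i]
    have hc : fderiv ℝ (fun _ : Pt n => (((0 : Fin n → ℝ), Pi.single i 1) : Pt n)) p = 0 :=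
      fderiv_const_apply _
    rw [hc]
    refine Prod.ext ?_ ?_
    · simp
    · funext m; simp
  have v2 : gLift g a b 0 p ((0 : Fin n → ℝ), fun m => -pd i (Vf m) p.1)
      ((Pi.single j 1, (0 : Fin n → ℝ)) : Pt n)
      = -(b * ∑ l, g p.1 j l * pd i (Vf l) p.1) := by
    rw [glift0_vert_left]
    simp [Pi.single_apply, mul_ite, ite_mul, Finset.sum_ite_eq, Finset.sum_ite_eq',
      mul_neg, neg_mul, Finset.mul_sum]
  have hw1 : (lie (completeLift g Vf)
      (fun _ => ((Pi.single j 1, (0 : Fin n → ℝ)) : Pt n)) p).1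
      = fun k => -pd j (Vf k) p.1 := by
    unfold lie
    rw [completeLift_eq g Vf]
    have hc : fderiv ℝ (fun _ : Pt n => ((Pi.single j 1, (0 : Fin n → ℝ)) : Pt n)) p = 0 :=
      fderiv_const_apply _
    rw [hc]
    funext k
    simp only [ContinuousLinearMap.zero_apply, zero_sub, Prod.fst_neg, Pi.neg_apply]
    rw [fderiv_XC_hor_fst hU hVf hp j k]
  have v3 : gLift g a b 0 p ((0 : Fin n → ℝ), Pi.single i 1)
      (lie (completeLift g Vf) (fun _ => ((Pi.single j 1, (0 : Fin n → ℝ)) : Pt n)) p)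
      = -(b * ∑ k, g p.1 k i * pd j (Vf k) p.1) := by
    rw [glift0_vert_left, hw1]
    simp [Pi.single_apply, mul_ite, ite_mul, Finset.sum_ite_eq, Finset.sum_ite_eq',
      mul_neg, neg_mul, Finset.mul_sum]
  have goal1 : lieDer (completeLift g Vf) (gLift g a b 0)
      (fun _ => (((0 : Fin n → ℝ), Pi.single i 1) : Pt n))
      (fun _ => ((Pi.single j 1, (0 : Fin n → ℝ)) : Pt n)) p
      = dirD (completeLift g Vf)
          (fun q : Pt n => gLift g a b 0 q ((0 : Fin n → ℝ), Pi.single i 1)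
            ((Pi.single j 1, (0 : Fin n → ℝ)) : Pt n)) p
        - gLift g a b 0 p
            (lie (completeLift g Vf) (fun _ => (((0 : Fin n → ℝ), Pi.single i 1) : Pt n)) p)
            ((Pi.single j 1, (0 : Fin n → ℝ)) : Pt n)
        - gLift g a b 0 p ((0 : Fin n → ℝ), Pi.single i 1)
            (lie (completeLift g Vf) (fun _ => ((Pi.single j 1, (0 : Fin n → ℝ)) : Pt n)) p) :=
    rfl
  rw [goal1, e1, e2, v2, v3]
  ring

end Aux

/-- If the complete lift `X^C` of a smooth vector field `V` on `U` is
conformal for the lift metric `g̃ = a g₁ + b g₂ + c g₃` (with `a·c − b² ≠ 0`) with factor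
`Ω`, then `∂Ω/∂y^k = 0` for every `k`: `Ω` depends only on the position variables. -/
theorem completeLift_conformal_factor_position (n : ℕ) (hn : 1 ≤ n) (U : Set (Fin n → ℝ))
    (hU : IsOpen U) (g : (Fin n → ℝ) → Matrix (Fin n) (Fin n) ℝ) (hg : IsMetric U g)
    (a b c : ℝ) (habc : a * c - b ^ 2 ≠ 0)
    (Vf : Fin n → (Fin n → ℝ) → ℝ) (hVf : ∀ h, ContDiffOn ℝ (⊤ : ℕ∞) (Vf h) U)
    (Ω : Pt n → ℝ) (hΩ : ContDiffOn ℝ (⊤ : ℕ∞) Ω (U ×ˢ Set.univ))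
    (hconf : Conformal U g a b c (completeLift g Vf) Ω) :
    ∀ k : Fin n, ∀ p : Pt n, p.1 ∈ U → dirD (XV k) Ω p = 0 := by
  obtain ⟨hgs, hgsym, hgpos⟩ := hg
  have i0 : Fin n := ⟨0, hn⟩
  have gpos : ∀ z ∈ U, 0 < g z i0 i0 := by
    intro z hz
    have hne : (Pi.single i0 1 : Fin n → ℝ) ≠ 0 := by
      intro hzero
      have h0 : (Pi.single i0 (1:ℝ) : Fin n → ℝ) i0 = 0 := by rw [hzero]; rfl
      rw [Pi.single_eq_same] at h0
      exact one_ne_zero h0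
    have h := (hgpos z hz).dotProduct_mulVec_pos hne
    simpa [dotProduct, Matrix.mulVec, Pi.single_apply, mul_ite, ite_mul,
      Finset.sum_ite_eq, Finset.sum_ite_eq'] using h
  have hconst : ∀ q : Pt n, q.1 ∈ U → Ω q = Ω (q.1, 0) := by
    intro q hq
    by_cases hc : c = 0
    · have hb : b ≠ 0 := fun h => habc (by rw [hc, h]; ring)
      subst hc
      have hval : ∀ r : Pt n, gLift g a b 0 r ((0 : Fin n → ℝ), Pi.single i0 1)
          ((Pi.single i0 1, (0 : Fin n → ℝ)) : Pt n) = b * g r.1 i0 i0 := by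
        intro r
        rw [glift0_vert_left]
        congr 1
        simp [Pi.single_apply, mul_ite, ite_mul, Finset.sum_ite_eq, Finset.sum_ite_eq']
      have h1 := hconf (fun _ => (((0 : Fin n → ℝ), Pi.single i0 1) : Pt n))
        (fun _ => ((Pi.single i0 1, (0 : Fin n → ℝ)) : Pt n))
        contDiffOn_const contDiffOn_const q hq
      have h2 := hconf (fun _ => (((0 : Fin n → ℝ), Pi.single i0 1) : Pt n))
        (fun _ => ((Pi.single i0 1, (0 : Fin n → ℝ)) : Pt n))
        contDiffOn_const contDiffOn_const ((q.1, (0 : Fin n → ℝ)) : Pt n) hq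
      rw [keyB hU g hgs a b Vf hVf i0 i0 hq] at h1
      rw [keyB hU g hgs a b Vf hVf i0 i0 (p := ((q.1, (0 : Fin n → ℝ)) : Pt n)) hq] at h2
      simp only [hval] at h1 h2
      have h3 := h1.symm.trans h2
      have hK : b * g q.1 i0 i0 ≠ 0 := mul_ne_zero hb (ne_of_gt (gpos q.1 hq))
      have h4 : 2 * Ω q = 2 * Ω (q.1, 0) := mul_right_cancel₀ hK h3
      linarith
    · have hval : ∀ r : Pt n, gLift g a b c r ((0 : Fin n → ℝ), Pi.single i0 1)
          ((0 : Fin n → ℝ), Pi.single i0 1) = c * g r.1 i0 i0 := by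
        intro r
        rw [glift_vv]
        congr 1
        simp [Pi.single_apply, mul_ite, ite_mul, Finset.sum_ite_eq, Finset.sum_ite_eq']
      have h1 := hconf (fun _ => (((0 : Fin n → ℝ), Pi.single i0 1) : Pt n))
        (fun _ => (((0 : Fin n → ℝ), Pi.single i0 1) : Pt n))
        contDiffOn_const contDiffOn_const q hq
      have h2 := hconf (fun _ => (((0 : Fin n → ℝ), Pi.single i0 1) : Pt n))
        (fun _ => (((0 : Fin n → ℝ), Pi.single i0 1) : Pt n))
        contDiffOn_const contDiffOn_const ((q.1, (0 : Fin n → ℝ)) : Pt n) hq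
      rw [keyA hU g hgs a b c Vf hVf i0 i0 hq] at h1
      rw [keyA hU g hgs a b c Vf hVf i0 i0 (p := ((q.1, (0 : Fin n → ℝ)) : Pt n)) hq] at h2
      simp only [hval] at h1 h2
      have h3 := h1.symm.trans h2
      have hK : c * g q.1 i0 i0 ≠ 0 := mul_ne_zero hc (ne_of_gt (gpos q.1 hq))
      have h4 : 2 * Ω q = 2 * Ω (q.1, 0) := mul_right_cancel₀ hK h3
      linarith
  intro k p hp
  have hdΩ : DifferentiableAt ℝ Ω p :=
    (hΩ.differentiableOn (by simp)).differentiableAt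
      ((hU.prod isOpen_univ).mem_nhds (Set.mem_prod.2 ⟨hp, trivial⟩))
  show fderiv ℝ Ω p (XV k p) = 0
  refine affine_fderiv Ω p (((0 : Fin n → ℝ), Pi.single k 1) : Pt n) (Ω (p.1, 0)) 0 hdΩ
    fun t => ?_
  have h1 : (p + t • ((((0 : Fin n → ℝ), Pi.single k 1)) : Pt n)).1 = p.1 := by simp
  rw [hconst _ (by rw [h1]; exact hp), h1]
  ring


end TangentLift
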